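/- There exist two computational problems P₀ = (Ξ₀, Ω₀, M₀, Λ₀) and P₁ = (Ξ₁, Ω₁, M₁, Λ₁), with Ω₀ = {∗}, M₀ = {0}, Λ₀ = ∅, Ξ₀ constant, and Ω₁ = {a, b}, M₁ = {0,1} discrete, Λ₁ = {e} with e separating a and b, Ξ₁(a) = 0 ≠ 1 = Ξ₁(b), such that no computational problem U = (Ξ_U, Ω_U, M_U, Λ_U) satisfying the SCI consistency condition (Ξ_U(A) ≠ Ξ_U(B) → ∃ f ∈ Λ_U, f(A) ≠ f(B)) admits finite-query transport reductions P₀ ≤ U and P₁ ≤ U with continuous (or Borel) decoders. -/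
import Mathlib


/-- An SCI computational problem. -/
structure CompProb where
  Ω : Type
  M : Type
  met : MetricSpace M
  Ξ : Ω → M
  Λ : Set (Ω → ℂ)

/-- A decoder predicate on maps between metric spaces. -/
def DecPred : Type 1 :=
  ∀ (M N : Type), MetricSpace M → MetricSpace N → (M → N) → Prop

/-- The continuous decoder class. -/
def ContClass : DecPred := fun M N mM mN D => by
  letI := mM; letI := mN; exact Continuous D

/-- The Borel-measurable decoder class. -/
def BorClass : DecPred := fun M N mM mN D => by
  letI := mM; letI := mN
  exact @Measurable M N (borel M) (borel N) D

/-- The SCI consistency condition on a computational problem. -/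
def Consistent (P : CompProb) : Prop :=
  ∀ A B : P.Ω, P.Ξ A ≠ P.Ξ B → ∃ f ∈ P.Λ, f A ≠ f B

/-- Finite-query transport with decoders from the class `R`. -/
def Reduces (R : DecPred) (Q P : CompProb) : Prop :=
  ∃ (E : Q.Ω → P.Ω) (D : P.M → Q.M),
    R P.M Q.M P.met Q.met D ∧
    (∀ A : Q.Ω, Q.Ξ A = D (P.Ξ (E A))) ∧
    (∀ f ∈ P.Λ, ∃ (m : ℕ) (_ : 0 < m) (γ : Fin m → (Q.Ω → ℂ))
      (ϑ : (Fin m → ℂ) → ℂ),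
      (∀ j, γ j ∈ Q.Λ) ∧ ∀ A : Q.Ω, f (E A) = ϑ (fun j => γ j A))

/-- There exist two computational problems — one with a singleton input class,
singleton output space, empty evaluation family and constant target map, the other
with a two-point input class, two-point discrete output space, a separating query
and a nonconstant target map — which admit no common upper bound satisfying the
SCI consistency condition, for either the continuous or the Borel decoder class.
Hence the full transport-degree quotient is not an upper semilattice. -/
theorem no_common_upper_bound :
    ∃ P₀ P₁ : CompProb,
      (∃ o : P₀.Ω, ∀ A : P₀.Ω, A = o) ∧
      (∃ y : P₀.M, ∀ x : P₀.M, x = y) ∧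
      P₀.Λ = ∅ ∧ (∀ A B : P₀.Ω, P₀.Ξ A = P₀.Ξ B) ∧
      (∃ a b : P₁.Ω, a ≠ b ∧ (∀ A : P₁.Ω, A = a ∨ A = b) ∧
        P₁.Ξ a ≠ P₁.Ξ b ∧ ∃ e ∈ P₁.Λ, e a ≠ e b) ∧
      (∀ R : DecPred, R = ContClass ∨ R = BorClass →
        ¬ ∃ U : CompProb, Consistent U ∧ Reduces R P₀ U ∧ Reduces R P₁ U) := by
  refine ⟨⟨Unit, Unit, inferInstance, fun _ => (), ∅⟩,
    ⟨Bool, ℝ, inferInstance, fun b => if b then 1 else 0,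
      {fun b => if b then 1 else 0}⟩, ⟨(), fun _ => rfl⟩, ⟨(), fun _ => rfl⟩,
    rfl, fun _ _ => rfl,
    ⟨true, false, by simp, fun A => by cases A <;> simp, by norm_num,
      ⟨_, rfl, by norm_num⟩⟩, ?_⟩
  rintro R _ ⟨U, hcons, ⟨E₀, D₀, _, _, hsim₀⟩, ⟨E₁, D₁, _, hΞ₁, _⟩⟩
  -- U.Λ must be empty
  have hUΛ : U.Λ = ∅ := by
    by_contra h
    obtain ⟨f, hf⟩ := Set.nonempty_iff_ne_empty.mpr h
    obtain ⟨m, hm, γ, ϑ, hγ, _⟩ := hsim₀ f hf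
    exact absurd (hγ ⟨0, hm⟩) (Set.notMem_empty _)
  -- hence Ξ_U is constant
  have hconst : U.Ξ (E₁ true) = U.Ξ (E₁ false) := by
    by_contra h
    obtain ⟨f, hf, _⟩ := hcons _ _ h
    rw [hUΛ] at hf
    exact Set.notMem_empty _ hf
  have : (1:ℝ) = 0 := by
    calc (1:ℝ) = D₁ (U.Ξ (E₁ true)) := by simpa using hΞ₁ true
      _ = D₁ (U.Ξ (E₁ false)) := by rw [hconst]
      _ = 0 := by simpa using (hΞ₁ false).symm
  exact one_ne_zero this
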